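/- arXiv:2111.01656 — 2 statements merged into one kernel-verified Lean document; each statement's English description precedes it below -/
import Mathlib

section
/- The quantum strategy using the Bell state with Alice measuring in the computational or Hadamard basis (according to her input) and Bob measuring in bases rotated by ±π/8 (according to his input) wins the CHSH game with probability cos²(π/8) = (2+√2)/4 ≈ 0.8536 on each of the four input pairs. -/
open Real

/-- The measurement basis vector for outcome `o` in the orthonormal basis of `ℝ²`
rotated by angle `α` from the computational basis. -/
noncomputable def basisVec (α : ℝ) (o : Bool) : Fin 2 → ℝ :=
  if o then ![-Real.sin α, Real.cos α] else ![Real.cos α, Real.sin α]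

/-- Alice's measurement angle on input `x`: `0` or `π/4`. -/
noncomputable def aliceAngle (x : Bool) : ℝ := if x then Real.pi / 4 else 0

/-- Bob's measurement angle on input `y`: `π/8 − y·π/4`. -/
noncomputable def bobAngle (y : Bool) : ℝ :=
  Real.pi / 8 - (if y then Real.pi / 4 else 0)

/-- The amplitude of outcome pair `(a, b)` when the Bell state `(|00⟩+|11⟩)/√2` is measured
in the product of the bases rotated by `α` (Alice) and `β` (Bob). -/
noncomputable def bellAmp (α β : ℝ) (a b : Bool) : ℝ :=
  (Real.sqrt 2)⁻¹ * (∑ i : Fin 2, basisVec α a i * basisVec β b i)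

/-- The probability of winning the CHSH game on input pair `(x, y)` with the quantum
strategy: sum of outcome probabilities over outcomes `(a,b)` with `x ∧ y = a ⊕ b`. -/
noncomputable def winProb (x y : Bool) : ℝ :=
  ∑ a : Bool, ∑ b : Bool,
    if (x && y) = Bool.xor a b then (bellAmp (aliceAngle x) (bobAngle y) a b) ^ 2 else 0

/-! Measuring the Bell state in bases rotated by `α` and `β` gives equal outcomes with
probability `cos² (α - β)` and different ones with probability `sin² (α - β)`. The
angle differences are `∓π/8` on the pairs where equal outcomes win, and `3π/8` on the
pair `(1, 1)`, where different outcomes win and `sin² (3π/8) = cos² (π/8)`. -/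

lemma sum_basisVec_mul_basisVec (α β : ℝ) (a b : Bool) :
    ∑ i : Fin 2, basisVec α a i * basisVec β b i =
      if a = b then Real.cos (α - β) else (if a then -1 else 1) * Real.sin (α - β) := by
  cases a <;> cases b <;>
    simp [basisVec, Fin.sum_univ_two, Real.cos_sub, Real.sin_sub] <;> ring

lemma bellAmp_sq (α β : ℝ) (a b : Bool) :
    bellAmp α β a b ^ 2 =
      (if a = b then Real.cos (α - β) ^ 2 else Real.sin (α - β) ^ 2) / 2 := by
  rw [bellAmp, sum_basisVec_mul_basisVec, mul_pow, inv_pow, Real.sq_sqrt zero_le_two]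
  split_ifs <;> simp [div_eq_inv_mul]

lemma sum_bellAmp_sq_of_xor_eq (α β : ℝ) (c : Bool) :
    (∑ a : Bool, ∑ b : Bool, if c = Bool.xor a b then bellAmp α β a b ^ 2 else 0) =
      if c then Real.sin (α - β) ^ 2 else Real.cos (α - β) ^ 2 := by
  cases c <;> simp [bellAmp_sq, mul_div_cancel₀]

lemma winProb_eq (x y : Bool) :
    winProb x y =
      if x && y then Real.sin (aliceAngle x - bobAngle y) ^ 2
      else Real.cos (aliceAngle x - bobAngle y) ^ 2 :=
  sum_bellAmp_sq_of_xor_eq _ _ _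

/-- The quantum CHSH strategy (Bell state; Alice measures at angles `0, π/4`, Bob at
`π/8, −π/8`) wins with probability `cos²(π/8) = (2+√2)/4` on each of the four input pairs. -/
theorem chsh_quantum_strategy_wins :
    (∀ x y : Bool, winProb x y = Real.cos (Real.pi / 8) ^ 2) ∧
    Real.cos (Real.pi / 8) ^ 2 = (2 + Real.sqrt 2) / 4 := by
  refine ⟨fun x y => ?_, ?_⟩
  · rw [winProb_eq]
    cases x <;> cases y <;>
      simp only [aliceAngle, bobAngle, Bool.and_self, Bool.and_false, Bool.false_and,
        Bool.false_eq_true, ↓reduceIte]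
    · rw [show (0 : ℝ) - (π / 8 - 0) = -(π / 8) by ring, Real.cos_neg]
    · rw [show (0 : ℝ) - (π / 8 - π / 4) = π / 8 by ring]
    · rw [show π / 4 - (π / 8 - 0) = π / 8 by ring]
    · rw [show π / 4 - (π / 8 - π / 4) = π / 2 - π / 8 by ring, Real.sin_pi_div_two_sub]
  · rw [Real.cos_pi_div_eight, div_pow, Real.sq_sqrt (by positivity)]
    norm_num
end

section
/- Consider uniformly random bits L(j), L(j+1), L(j+2), L(j+8), R(j), K(j) with the constraints L(j+2) = L(j) and K(j) = R(j). Define L'(j) = R(j) ⊕ K(j) ⊕ (L(j+1) ∧ L(j+8)) ⊕ L(j+2). Then Pr(L(j) ⊕ L'(j) = 0) = 3/4. -/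
/-- SIMON round-function bit update under the constraints `L(j+2) = L(j)` and
`K(j) = R(j)`: `L'(j) = R(j) ⊕ K(j) ⊕ (L(j+1) ∧ L(j+8)) ⊕ L(j+2)`, as a function of
the free bits `l0 = L(j)`, `l1 = L(j+1)`, `l8 = L(j+8)`, `r = R(j)`. -/
def simonUpdate (l0 l1 l8 r : Bool) : Bool :=
  Bool.xor r (Bool.xor r (Bool.xor (l1 && l8) l0))

/- The key-addition `R ⊕ K` and the linear term `L(j+2) = L(j)` cancel, so only the
AND term survives; it vanishes on three of the four values of `(L(j+1), L(j+8))`. -/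
theorem xor_simonUpdate (l0 l1 l8 r : Bool) :
    Bool.xor l0 (simonUpdate l0 l1 l8 r) = (l1 && l8) := by
  rw [simonUpdate, ← Bool.xor_assoc r r, Bool.xor_self, Bool.false_xor, Bool.xor_comm (l1 && l8),
    ← Bool.xor_assoc, Bool.xor_self, Bool.false_xor]

/-- With `L(j), L(j+1), L(j+8), R(j)` independent uniform bits and the constraints
`L(j+2) = L(j)`, `K(j) = R(j)`, the probability that `L(j) ⊕ L'(j) = 0` is `3/4`. -/
theorem simon_linear_approx_bias :
    (((Finset.univ : Finset (Bool × Bool × Bool × Bool)).filter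
        (fun v => Bool.xor v.1 (simonUpdate v.1 v.2.1 v.2.2.1 v.2.2.2) = false)).card : ℚ) /
      (Fintype.card (Bool × Bool × Bool × Bool) : ℚ) = 3 / 4 := by
  simp only [xor_simonUpdate]
  have h_card_event : ((Finset.univ : Finset (Bool × Bool × Bool × Bool)).filter
      (fun v => (v.2.1 && v.2.2.1) = false)).card = 12 := by
    decide
  rw [h_card_event, Fintype.card_prod, Fintype.card_bool]
  norm_num
end
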